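/- A triple (K, P, τ) ∈ 𝔻^T is a fixed point of Ψ^T if and only if it is a fixed point of the recursive map Ψ̄^T, i.e. (K, P, τ) = Ψ^T(K, P, τ) if and only if (K, P, τ) = Ψ̄^T(K, P, τ). -/

import Mathlib

/-!
On a finite space in which every point has positive mass, the conditional expectation with
respect to `𝓕 l` is the average over the atoms of `𝓕 l`. By the tower property the survival
process `ℙ(τ_i > T | 𝓕 l)` therefore obeys the backward recursion of `Ψ̄^T` with terminal value
`1{τ_i > T}`, and conversely a process obeying that recursion is pinned down by backward induction
from its terminal value. The `K` and `τ` components of the two maps coincide.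
-/

open MeasureTheory

namespace Paper

open Classical in
/-- real-valued indicator of a proposition -/
noncomputable def indR (p : Prop) : ℝ := if p then 1 else 0

open Classical in
/-- boolean indicator of a proposition -/
noncomputable def indB (p : Prop) : Bool := if p then true else false

/-- The atom of the σ-algebra `m` containing the point `ω`:
the intersection of all `m`-measurable sets containing `ω`. -/
def atomOf {Ω : Type*} (m : MeasurableSpace Ω) (ω : Ω) : Set Ω :=
  ⋂₀ {s : Set Ω | MeasurableSet[m] s ∧ ω ∈ s}

/-- The set `S`, with the order induced from the ambient preorder, is a nonempty complete
lattice: it has a greatest and a least element and every subset of `S` has a least upper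
bound and a greatest lower bound within `S`. -/
def LatticeStructure {X : Type*} [Preorder X] (S : Set X) : Prop :=
  S.Nonempty ∧
  (∃ top ∈ S, ∀ z ∈ S, z ≤ top) ∧
  (∃ bot ∈ S, ∀ z ∈ S, bot ≤ z) ∧
  (∀ A ⊆ S,
    (∃ u ∈ S, (∀ a ∈ A, a ≤ u) ∧ ∀ w ∈ S, (∀ a ∈ A, a ≤ w) → u ≤ w) ∧
    (∃ v ∈ S, (∀ a ∈ A, v ≤ a) ∧ ∀ w ∈ S, (∀ a ∈ A, w ≤ a) → w ≤ v))

/-- The space of triples `(K, P, τ)`: capital process, survival-probability process,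
default-time vector, with the componentwise (pointwise) order. -/
abbrev Tri (Ω : Type*) (n ℓ : ℕ) :=
  (Fin (ℓ+1) → Ω → Fin n → ℝ) × (Fin (ℓ+1) → Ω → Fin n → ℝ) × (Fin n → Ω → ℝ)

/-- Data of the single-maturity interbank model. -/
structure SM (Ω : Type*) (n ℓ : ℕ) where
  /-- maturity -/
  T : ℝ
  /-- times `0 = t 0 < t 1 < ... < t ℓ = T` -/
  t : Fin (ℓ+1) → ℝ
  /-- external asset process -/
  x : Fin (ℓ+1) → Ω → Fin n → ℝ
  /-- interbank liabilities -/
  L : Fin n → Fin n → ℝ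
  /-- external liabilities -/
  L0 : Fin n → ℝ
  /-- recovery rate -/
  β : ℝ
  /-- risk-free rate -/
  r : ℝ

namespace SM

variable {Ω : Type*} {n ℓ : ℕ}

/-- total liabilities `p̄_i` -/
noncomputable def pbar (M : SM Ω n ℓ) (i : Fin n) : ℝ := (∑ j, M.L i j) + M.L0 i

/-- discount factor `e^{-r (T - t l)}` -/
noncomputable def disc (M : SM Ω n ℓ) (l : Fin (ℓ+1)) : ℝ :=
  Real.exp (-(M.r * (M.T - M.t l)))

/-- the capital component `Ψ^T_K` of the clearing map -/
noncomputable def ΨK (M : SM Ω n ℓ) (l : Fin (ℓ+1)) (Pt : Ω → Fin n → ℝ)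
    (ω : Ω) (i : Fin n) : ℝ :=
  M.x l ω i + M.disc l * (∑ j, M.L j i * (M.β + (1 - M.β) * Pt ω j))
    - M.disc l * M.pbar i

/-- the default-time component `Ψ^T_τ` of the clearing map: the first time `t l` at which
the capital of bank `i` is negative, and `T + 1` if the capital stays nonnegative -/
noncomputable def Ψτ (M : SM Ω n ℓ) (K : Fin (ℓ+1) → Ω → Fin n → ℝ)
    (i : Fin n) (ω : Ω) : ℝ :=
  sInf (insert (M.T + 1) ((fun l => M.t l) '' {l : Fin (ℓ+1) | K l ω i < 0}))

/-- the survival-probability component `Ψ^T_P` of the clearing map: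
`ℙ(τ_i > T | 𝓕 l)` -/
noncomputable def ΨP [MeasurableSpace Ω] (M : SM Ω n ℓ)
    (𝓕 : Fin (ℓ+1) → MeasurableSpace Ω) (μ : Measure Ω)
    (τ : Fin n → Ω → ℝ) (l : Fin (ℓ+1)) (ω : Ω) (i : Fin n) : ℝ :=
  (μ[fun ω' => indR (M.T < τ i ω') | 𝓕 l]) ω

/-- membership in the domain `𝔻^T`: adaptedness, the balance-sheet bounds on `K`,
`P` valued in `[0,1]`, and `τ` valued in `{t_0, ..., t_ℓ, T+1}` -/
def memD [MeasurableSpace Ω] (M : SM Ω n ℓ) (𝓕 : Fin (ℓ+1) → MeasurableSpace Ω)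
    (K P : Fin (ℓ+1) → Ω → Fin n → ℝ) (τ : Fin n → Ω → ℝ) : Prop :=
  (∀ l i, Measurable[𝓕 l] fun ω => K l ω i) ∧
  (∀ l i, Measurable[𝓕 l] fun ω => P l ω i) ∧
  (∀ l ω i, M.x l ω i - M.disc l * M.pbar i ≤ K l ω i) ∧
  (∀ l ω i, K l ω i ≤ M.x l ω i + M.disc l * ((∑ j, M.L j i) - M.pbar i)) ∧
  (∀ l ω i, 0 ≤ P l ω i ∧ P l ω i ≤ 1) ∧
  (∀ i ω, (∃ l, τ i ω = M.t l) ∨ τ i ω = M.T + 1)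

/-- the clearing map `Ψ^T` -/
noncomputable def Ψmap [MeasurableSpace Ω] (M : SM Ω n ℓ)
    (𝓕 : Fin (ℓ+1) → MeasurableSpace Ω) (μ : Measure Ω) (z : Tri Ω n ℓ) : Tri Ω n ℓ :=
  (fun l ω i => M.ΨK l (z.2.1 l) ω i,
   fun l ω i => M.ΨP 𝓕 μ z.2.2 l ω i,
   fun i ω => M.Ψτ z.1 i ω)

/-- the set of clearing solutions: fixed points of `Ψ^T` in `𝔻^T` -/
def clearingSet [MeasurableSpace Ω] (M : SM Ω n ℓ)
    (𝓕 : Fin (ℓ+1) → MeasurableSpace Ω) (μ : Measure Ω) : Set (Tri Ω n ℓ) :=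
  {z | M.memD 𝓕 z.1 z.2.1 z.2.2 ∧ M.Ψmap 𝓕 μ z = z}

/-- Standing assumptions of the single-maturity model. -/
structure Valid [MeasurableSpace Ω] (M : SM Ω n ℓ)
    (𝓕 : Fin (ℓ+1) → MeasurableSpace Ω) (μ : Measure Ω) : Prop where
  hn : 1 ≤ n
  hTop : (inferInstance : MeasurableSpace Ω) = ⊤
  hprob : IsProbabilityMeasure μ
  hpos : ∀ ω : Ω, 0 < μ {ω}
  hmono : Monotone 𝓕
  h0 : 𝓕 0 = ⊥
  hlast : 𝓕 (Fin.last ℓ) = (inferInstance : MeasurableSpace Ω)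
  ht : StrictMono M.t
  ht0 : M.t 0 = 0
  htT : M.t (Fin.last ℓ) = M.T
  hx : ∀ l i, Measurable[𝓕 l] fun ω => M.x l ω i
  hx0 : ∀ l ω i, 0 ≤ M.x l ω i
  hL : ∀ i j, 0 ≤ M.L i j
  hLd : ∀ i, M.L i i = 0
  hL0 : ∀ i, 0 ≤ M.L0 i
  hβ0 : 0 ≤ M.β
  hβ1 : M.β ≤ 1
  hr : 0 ≤ M.r

end SM

/-- index `(l+1) ∧ ℓ` -/
def nextIdx {ℓ : ℕ} (l : Fin (ℓ+1)) : Fin (ℓ+1) := ⟨min (l.val + 1) ℓ, by omega⟩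

namespace SM

open Classical in
/-- the backward-recursion survival component `Ψ̄^T_P`: at the terminal time it is the
indicator `1{τ_i > T}`; before the terminal time it is the conditional average, over the
current atom of `𝓕 l`, of the next-period survival probabilities `Pnext` (the sum over
successor atoms `Σ ℙ(ω_{l+1}) P_i(t_{l+1}, ω_{l+1}) / ℙ(ω_l)`, written as a sum over points
of the atom, to which it is identical for `𝓕 (l+1)`-measurable `Pnext`). -/
noncomputable def Ψbar_P [MeasurableSpace Ω] [Fintype Ω] (M : SM Ω n ℓ)
    (𝓕 : Fin (ℓ+1) → MeasurableSpace Ω) (μ : MeasureTheory.Measure Ω)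
    (Pnext : Ω → Fin n → ℝ) (τ : Fin n → Ω → ℝ)
    (l : Fin (ℓ+1)) (ω : Ω) (i : Fin n) : ℝ :=
  if l = Fin.last ℓ then indR (M.T < τ i ω)
  else
    (∑ ω' ∈ Finset.univ.filter (fun ω' => ω' ∈ atomOf (𝓕 l) ω),
        (μ {ω'}).toReal * Pnext ω' i) / (μ (atomOf (𝓕 l) ω)).toReal

/-- the recursive clearing map `Ψ̄^T`: same as `Ψ^T` in the `K` and `τ` components, with the
`P` component replaced by the backward recursion `Ψ̄^T_P` -/
noncomputable def Ψbar [MeasurableSpace Ω] [Fintype Ω] (M : SM Ω n ℓ)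
    (𝓕 : Fin (ℓ+1) → MeasurableSpace Ω) (μ : MeasureTheory.Measure Ω)
    (z : Tri Ω n ℓ) : Tri Ω n ℓ :=
  (fun l ω i => M.ΨK l (z.2.1 l) ω i,
   fun l ω i => M.Ψbar_P 𝓕 μ (z.2.1 (nextIdx l)) z.2.2 l ω i,
   fun i ω => M.Ψτ z.1 i ω)

end SM

section AtomAverage

variable {Ω : Type*}

lemma atomOf_eq_measurableAtom (m : MeasurableSpace Ω) (ω : Ω) :
    atomOf m ω = @measurableAtom Ω m ω := by
  ext x
  simp only [atomOf, measurableAtom, Set.mem_sInter, Set.mem_ofPred_eq, Set.mem_iInter, and_imp]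
  exact forall_congr' fun _ => forall_comm

lemma measurableSet_atomOf [Countable Ω] (m : MeasurableSpace Ω) (ω : Ω) :
    MeasurableSet[m] (atomOf m ω) :=
  atomOf_eq_measurableAtom m ω ▸ @MeasurableSet.measurableAtom_of_countable Ω m _ ω

lemma mem_atomOf_self (m : MeasurableSpace Ω) (ω : Ω) : ω ∈ atomOf m ω :=
  atomOf_eq_measurableAtom m ω ▸ @mem_measurableAtom_self Ω m ω

lemma Measurable.eq_of_mem_atomOf {β : Type*} [MeasurableSpace β] [MeasurableSingletonClass β]
    {m : MeasurableSpace Ω} {f : Ω → β} (hf : Measurable[m] f)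
    {ω ω' : Ω} (h : ω' ∈ atomOf m ω) : f ω' = f ω := by
  rw [atomOf_eq_measurableAtom] at h
  exact @mem_of_mem_measurableAtom Ω m ω ω' h _ (hf (measurableSet_singleton (f ω))) rfl

lemma eq_of_ae_eq_of_forall_measure_singleton_ne_zero [Countable Ω] [MeasurableSpace Ω]
    {μ : Measure Ω} (hμ : ∀ ω, μ {ω} ≠ 0) {β : Type*} {f g : Ω → β} (h : f =ᵐ[μ] g) : f = g :=
  funext fun ω => ae_iff_of_countable.mp h ω (hμ ω)

variable [Fintype Ω]

open Classical in
noncomputable def atomAverage {mΩ : MeasurableSpace Ω} (μ : Measure[mΩ] Ω) (m : MeasurableSpace Ω)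
    (f : Ω → ℝ) (ω : Ω) : ℝ :=
  (∑ ω' ∈ Finset.univ.filter (fun ω' => ω' ∈ atomOf m ω), (μ {ω'}).toReal * f ω') /
    (μ (atomOf m ω)).toReal

/-- `μ[f|m]` is `m`-measurable, hence constant on the atom `A` of `ω`, so integrating it over
`A` gives `μ.real A * μ[f|m] ω`, while the defining property of `μ[f|m]` gives `∫ x in A, f`. -/
theorem condExp_apply_eq_atomAverage [mΩ : MeasurableSpace Ω] [MeasurableSingletonClass Ω]
    {m : MeasurableSpace Ω} (hm : m ≤ mΩ) (μ : Measure[mΩ] Ω) [IsFiniteMeasure μ]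
    (f : Ω → ℝ) {ω : Ω} (hω : μ (atomOf m ω) ≠ 0) :
    (μ[f|m]) ω = atomAverage μ m f ω := by
  classical
  set A := atomOf m ω
  have hf : Integrable f μ := .of_finite
  have hA : MeasurableSet[m] A := measurableSet_atomOf m ω
  have hconst : Set.EqOn (μ[f|m]) (fun _ => (μ[f|m]) ω) A := fun _ hω' =>
    Measurable.eq_of_mem_atomOf stronglyMeasurable_condExp.measurable hω'
  have hsum : ∫ x in A, f x ∂μ = ∑ x ∈ Finset.univ.filter (· ∈ A), μ.real {x} * f x := by
    simpa using setIntegral_finset (Finset.univ.filter (· ∈ A)) hf.integrableOn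
  have hint := setIntegral_condExp hm hf hA
  rw [setIntegral_congr_fun (hm A hA) hconst, setIntegral_const, smul_eq_mul, hsum] at hint
  rw [atomAverage, eq_div_iff (ENNReal.toReal_ne_zero.mpr ⟨hω, measure_ne_top μ A⟩), mul_comm]
  exact hint

end AtomAverage

theorem Fin.eq_iff_reverse_recursion {α : Type*} {ℓ : ℕ} {P Q : Fin (ℓ+1) → α}
    (A : Fin ℓ → α → α) (hQ : ∀ l, Q l.castSucc = A l (Q l.succ)) :
    Q = P ↔ Q (Fin.last ℓ) = P (Fin.last ℓ) ∧ ∀ l, A l (P l.succ) = P l.castSucc := by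
  refine ⟨by rintro rfl; exact ⟨rfl, fun l => (hQ l).symm⟩, fun ⟨hlast, hP⟩ => funext fun l => ?_⟩
  induction l using Fin.reverseInduction with
  | last => exact hlast
  | cast l ih => rw [hQ, ih, hP]

lemma nextIdx_castSucc {ℓ : ℕ} (l : Fin ℓ) : nextIdx l.castSucc = l.succ := by
  ext
  simp [nextIdx]

namespace SM

variable {Ω : Type*} [MeasurableSpace Ω] {n ℓ : ℕ} {M : SM Ω n ℓ}
  {𝓕 : Fin (ℓ+1) → MeasurableSpace Ω} {μ : Measure Ω}

lemma Valid.le_ambient (hM : M.Valid 𝓕 μ) (l : Fin (ℓ+1)) : 𝓕 l ≤ ‹MeasurableSpace Ω› :=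
  (hM.hmono (Fin.le_last l)).trans hM.hlast.le

lemma Valid.measurableSingletonClass (hM : M.Valid 𝓕 μ) : MeasurableSingletonClass Ω :=
  ⟨fun _ => hM.hTop.ge _ MeasurableSpace.measurableSet_top⟩

variable [Fintype Ω]

lemma Ψbar_P_last (Pnext : Ω → Fin n → ℝ) (τ : Fin n → Ω → ℝ) (ω : Ω) (i : Fin n) :
    M.Ψbar_P 𝓕 μ Pnext τ (Fin.last ℓ) ω i = indR (M.T < τ i ω) :=
  if_pos rfl

lemma Ψbar_P_castSucc (Pnext : Ω → Fin n → ℝ) (τ : Fin n → Ω → ℝ) (l : Fin ℓ) (ω : Ω)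
    (i : Fin n) :
    M.Ψbar_P 𝓕 μ Pnext τ l.castSucc ω i = atomAverage μ (𝓕 l.castSucc) (Pnext · i) ω :=
  if_neg (Fin.castSucc_ne_last l)

lemma ΨP_last (hM : M.Valid 𝓕 μ) (τ : Fin n → Ω → ℝ) :
    M.ΨP 𝓕 μ τ (Fin.last ℓ) = fun ω i => indR (M.T < τ i ω) := by
  funext ω i
  have := hM.measurableSingletonClass
  have := hM.hprob
  rw [ΨP, hM.hlast, condExp_of_stronglyMeasurable le_rfl
    (measurable_of_countable _).stronglyMeasurable Integrable.of_finite]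

/-- The tower property `μ[g|𝓕 l] = μ[μ[g|𝓕 (l+1)]|𝓕 l]`, read through
`condExp_apply_eq_atomAverage`. -/
lemma ΨP_castSucc (hM : M.Valid 𝓕 μ) (τ : Fin n → Ω → ℝ) (l : Fin ℓ) (ω : Ω) (i : Fin n) :
    M.ΨP 𝓕 μ τ l.castSucc ω i = atomAverage μ (𝓕 l.castSucc) (M.ΨP 𝓕 μ τ l.succ · i) ω := by
  have := hM.measurableSingletonClass
  have := hM.hprob
  have hpos : ∀ ω, μ {ω} ≠ 0 := fun ω => (hM.hpos ω).ne'
  have htower := eq_of_ae_eq_of_forall_measure_singleton_ne_zero hpos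
    (condExp_condExp_of_le (hM.hmono (Fin.castSucc_le_succ l)) (hM.le_ambient l.succ)
      (f := fun ω' => indR (M.T < τ i ω')))
  simp only [ΨP, ← htower]
  exact condExp_apply_eq_atomAverage (hM.le_ambient l.castSucc) μ _
    (measure_mono_null (Set.singleton_subset_iff.mpr (mem_atomOf_self _ ω)) |>.mt (hpos ω))

lemma ΨP_eq_iff_Ψbar_P_eq (hM : M.Valid 𝓕 μ) (τ : Fin n → Ω → ℝ)
    (P : Fin (ℓ+1) → Ω → Fin n → ℝ) :
    (fun l ω i => M.ΨP 𝓕 μ τ l ω i) = P ↔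
      (fun l ω i => M.Ψbar_P 𝓕 μ (P (nextIdx l)) τ l ω i) = P := by
  rw [Fin.eq_iff_reverse_recursion (fun l Pnext ω i => atomAverage μ (𝓕 l.castSucc) (Pnext · i) ω)
    (fun l => funext₂ (ΨP_castSucc hM τ l)), funext_iff (f := fun l ω i => M.Ψbar_P 𝓕 μ _ τ l ω i),
    Fin.forall_fin_succ', and_comm]
  simp only [ΨP_last hM, Ψbar_P_last, Ψbar_P_castSucc, nextIdx_castSucc]

end SM

open SM in
theorem clearing_iff_recursive_general
    {Ω : Type*} [Fintype Ω] [MeasurableSpace Ω] {n ℓ : ℕ}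
    (M : SM Ω n ℓ) (𝓕 : Fin (ℓ+1) → MeasurableSpace Ω) (μ : MeasureTheory.Measure Ω)
    (hM : M.Valid 𝓕 μ)
    (z : Tri Ω n ℓ) :
    M.Ψmap 𝓕 μ z = z ↔ M.Ψbar 𝓕 μ z = z := by
  obtain ⟨K, P, τ⟩ := z
  simp only [Ψmap, Ψbar, Prod.mk.injEq]
  exact Iff.rfl.and ((ΨP_eq_iff_Ψbar_P_eq hM τ P).and Iff.rfl)

open SM in
/-- Proposition 2.8: a triple `(K, P, τ) ∈ 𝔻^T` is a fixed point of the
clearing map `Ψ^T` if and only if it is a fixed point of the recursive map `Ψ̄^T`. -/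
theorem clearing_iff_recursive
    {Ω : Type*} [Fintype Ω] [MeasurableSpace Ω] {n ℓ : ℕ}
    (M : SM Ω n ℓ) (𝓕 : Fin (ℓ+1) → MeasurableSpace Ω) (μ : MeasureTheory.Measure Ω)
    (hM : M.Valid 𝓕 μ)
    (z : Tri Ω n ℓ) (hz : M.memD 𝓕 z.1 z.2.1 z.2.2) :
    M.Ψmap 𝓕 μ z = z ↔ M.Ψbar 𝓕 μ z = z :=
  clearing_iff_recursive_general M 𝓕 μ hM z

end Paper
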